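/- arXiv:2504.13935 — 2 statements merged into one kernel-verified Lean document; each statement's English description precedes it below -/
import Mathlib

section
/- For μ < 0 < b, σ > 0, and a natural number n, ∫₀^b u^n exp(−(u−μ)²/(2σ²)) du = Σ_{k=0}^{n} C(n,k) μ^(n−k) σ^(k+1) 2^((k−1)/2) [ γ((k+1)/2, (b−μ)²/(2σ²)) − γ((k+1)/2, μ²/(2σ²)) ]. -/
open MeasureTheory intervalIntegral Real Finset

/-- The lower incomplete gamma function `γ(s,x) = ∫₀ˣ t^(s−1) e^(−t) dt`. -/
noncomputable def lowerGamma (s x : ℝ) : ℝ :=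
  ∫ t in (0:ℝ)..x, t ^ (s - 1) * Real.exp (-t)

/-!
Translating by `μ` turns the integral into `∫_{-μ}^{b-μ} (v + μ)ⁿ e^{-v²/(2σ²)} dv`. Splitting it at
`0` (both endpoints are positive because `μ < 0 < b`) and expanding `(v + μ)ⁿ` binomially reduces it
to the moments `∫₀^c vᵏ e^{-v²/(2σ²)} dv` with `c ≥ 0`, which the substitution `t = v²/(2σ²)`
turns into `σ^(k+1) 2^((k-1)/2) γ((k+1)/2, c²/(2σ²))`.
-/

lemma sq_div_rpow_mul_div {σ x : ℝ} (hσ : 0 < σ) (hx : 0 < x) (k : ℕ) :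
    (x ^ 2 / (2 * σ ^ 2)) ^ (((k : ℝ) - 1) / 2) * (x / σ ^ 2)
      = x ^ k / (σ ^ (k + 1) * 2 ^ (((k : ℝ) - 1) / 2)) := by
  have sq_rpow : ∀ {y : ℝ}, 0 < y → (y ^ 2) ^ (((k : ℝ) - 1) / 2) = y ^ k / y := fun {y} hy => by
    rw [← rpow_natCast y 2, ← rpow_mul hy.le, ← rpow_natCast y k, ← rpow_sub_one hy.ne']
    push_cast
    ring_nf
  rw [div_rpow (by positivity) (by positivity), mul_rpow (by norm_num) (by positivity),
    sq_rpow hx, sq_rpow hσ]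
  field_simp
  ring

theorem integral_pow_mul_exp_neg_sq_div {σ c : ℝ} (hσ : 0 < σ) (hc : 0 ≤ c) (k : ℕ) :
    ∫ u in (0:ℝ)..c, u ^ k * exp (-u ^ 2 / (2 * σ ^ 2))
      = σ ^ (k + 1) * 2 ^ (((k : ℝ) - 1) / 2)
          * lowerGamma (((k : ℝ) + 1) / 2) (c ^ 2 / (2 * σ ^ 2)) := by
  set s : ℝ := ((k : ℝ) + 1) / 2
  set f : ℝ → ℝ := fun x => x ^ 2 / (2 * σ ^ 2)
  set g : ℝ → ℝ := fun t => t ^ (s - 1) * exp (-t)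
  set C : ℝ := σ ^ (k + 1) * 2 ^ (((k : ℝ) - 1) / 2)
  have hC : 0 < C := by positivity
  have hcomp : ∀ x ∈ Set.Ioc 0 c,
      (g ∘ f) x * (x / σ ^ 2) = x ^ k * exp (-x ^ 2 / (2 * σ ^ 2)) / C := fun x hx => by
    rw [Function.comp_apply, mul_right_comm, show s - 1 = ((k : ℝ) - 1) / 2 by ring,
      sq_div_rpow_mul_div hσ hx.1, neg_div]
    ring
  have hf_deriv : ∀ x, HasDerivAt f (x / σ ^ 2) x := fun x => by
    refine ((hasDerivAt_pow 2 x).div_const _).congr_deriv ?_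
    field_simp
    norm_num
  have hf_image : f '' Set.uIcc 0 c ⊆ Set.Ioc 0 (f c) ∪ {0} := by
    rintro _ ⟨x, hx, rfl⟩
    rw [Set.uIcc_of_le hc] at hx
    rcases hx.1.eq_or_lt with rfl | hx0
    · simp [f]
    · exact Or.inl ⟨by positivity, by simp only [f]; gcongr; exact hx.2⟩
  have hg_int : IntegrableOn g (f '' Set.uIcc 0 c) := by
    refine (IntegrableOn.union ?_ (by simp)).mono_set hf_image
    refine ((GammaIntegral_convergent (by positivity : 0 < s)).mono_set
      Set.Ioc_subset_Ioi_self).congr_fun (fun t _ => mul_comm _ _) measurableSet_Ioc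
  have hg_cont : ContinuousOn g (f '' Set.Ioo (min 0 c) (max 0 c)) := by
    rintro _ ⟨x, hx, rfl⟩
    rw [min_eq_left hc, max_eq_right hc] at hx
    have hfx : f x ≠ 0 := by have := hx.1; positivity
    exact ((continuousAt_rpow_const _ _ (Or.inl hfx)).mul (by fun_prop)).continuousWithinAt
  have hgf_int : IntegrableOn (fun x => (g ∘ f) x * (x / σ ^ 2)) (Set.uIcc 0 c) := by
    rw [Set.uIcc_of_le hc, integrableOn_Icc_iff_integrableOn_Ioc]
    refine (Continuous.integrableOn_Ioc (by fun_prop)).congr_fun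
      (fun x hx => (hcomp x hx).symm) measurableSet_Ioc
  -- For `k = 0` the integrand `t ^ (-1/2) * exp (-t)` of `γ` is unbounded near `0`, hence this
  -- form of the change of variables, which only asks `g` to be integrable.
  have hsubst := integral_comp_mul_deriv''' (hf := by fun_prop)
    (fun x _ => (hf_deriv x).hasDerivWithinAt) hg_cont hg_int hgf_int
  have hlhs : ∫ x in (0:ℝ)..c, (g ∘ f) x * (x / σ ^ 2)
      = (∫ u in (0:ℝ)..c, u ^ k * exp (-u ^ 2 / (2 * σ ^ 2))) / C := by
    rw [← intervalIntegral.integral_div]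
    refine intervalIntegral.integral_congr_ae (Filter.Eventually.of_forall fun x hx => ?_)
    rw [Set.uIoc_of_le hc] at hx
    exact hcomp x hx
  rw [hlhs, show f 0 = 0 by simp [f]] at hsubst
  rw [lowerGamma, ← hsubst]
  field_simp

theorem integral_add_pow_mul_exp_neg_sq_div {σ c : ℝ} (μ : ℝ) (hσ : 0 < σ) (hc : 0 ≤ c)
    (n : ℕ) :
    ∫ v in (0:ℝ)..c, (v + μ) ^ n * exp (-v ^ 2 / (2 * σ ^ 2))
      = ∑ k ∈ range (n + 1), (n.choose k : ℝ) * μ ^ (n - k) * σ ^ (k + 1)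
          * 2 ^ (((k : ℝ) - 1) / 2) * lowerGamma (((k : ℝ) + 1) / 2) (c ^ 2 / (2 * σ ^ 2)) := by
  have hexpand : ∀ v : ℝ, (v + μ) ^ n * exp (-v ^ 2 / (2 * σ ^ 2))
      = ∑ k ∈ range (n + 1),
          (n.choose k : ℝ) * μ ^ (n - k) * (v ^ k * exp (-v ^ 2 / (2 * σ ^ 2))) := fun v => by
    rw [add_pow, sum_mul]
    refine sum_congr rfl fun k _ => ?_
    ring
  simp_rw [hexpand]
  rw [intervalIntegral.integral_finsetSum fun k _ =>
    (by fun_prop : Continuous _).intervalIntegrable _ _]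
  refine sum_congr rfl fun k _ => ?_
  rw [intervalIntegral.integral_const_mul, integral_pow_mul_exp_neg_sq_div hσ hc k]
  ring

/-- For `μ < 0 < b`, `σ > 0` and `n : ℕ`,
`∫₀^b uⁿ exp(−(u−μ)²/(2σ²)) du
  = Σ_{k=0}^{n} C(n,k) μ^(n−k) σ^(k+1) 2^((k−1)/2)
    [γ((k+1)/2, (b−μ)²/(2σ²)) − γ((k+1)/2, μ²/(2σ²))]`. -/
theorem gaussian_moment_mu_neg (μ σ b : ℝ) (hμ : μ < 0) (hb : 0 < b)
    (hσ : 0 < σ) (n : ℕ) :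
    ∫ u in (0:ℝ)..b, u ^ n * Real.exp (-(u - μ) ^ 2 / (2 * σ ^ 2))
      = ∑ k ∈ Finset.range (n + 1),
          (n.choose k : ℝ) * μ ^ (n - k) * σ ^ (k + 1)
            * (2 : ℝ) ^ (((k : ℝ) - 1) / 2)
            * (lowerGamma (((k : ℝ) + 1) / 2) ((b - μ) ^ 2 / (2 * σ ^ 2))
               - lowerGamma (((k : ℝ) + 1) / 2) (μ ^ 2 / (2 * σ ^ 2))) := by
  set F : ℝ → ℝ := fun v => (v + μ) ^ n * exp (-v ^ 2 / (2 * σ ^ 2))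
  have hF : Continuous F := by fun_prop
  calc ∫ u in (0:ℝ)..b, u ^ n * exp (-(u - μ) ^ 2 / (2 * σ ^ 2))
      = ∫ v in (0:ℝ) - μ..b - μ, F v := by
        rw [← integral_comp_sub_right F μ]
        simp only [F, sub_add_cancel]
    _ = (∫ v in (0:ℝ)..b - μ, F v) - ∫ v in (0:ℝ)..0 - μ, F v :=
        (integral_interval_sub_left (hF.intervalIntegrable _ _) (hF.intervalIntegrable _ _)).symm
    _ = _ := by
        rw [integral_add_pow_mul_exp_neg_sq_div μ hσ (by linarith),
          integral_add_pow_mul_exp_neg_sq_div μ hσ (by linarith), ← sum_sub_distrib, zero_sub,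
          neg_sq]
        simp_rw [mul_sub]
end

section
/- For 0 < μ < b, σ > 0, and a natural number n, ∫₀^b u^n exp(−(u−μ)²/(2σ²)) du = Σ_{k=0}^{n} C(n,k) μ^(n−k) σ^(k+1) 2^((k−1)/2) [ γ((k+1)/2, (b−μ)²/(2σ²)) + (−1)^k γ((k+1)/2, μ²/(2σ²)) ]. -/
/-!
Translating by `μ` turns the integral into `∫_{-μ}^{b-μ} (μ + x)ⁿ e^{-x²/(2σ²)} dx`. Expanding
`(μ + x)ⁿ` binomially and splitting at `0` reduces it to the half-Gaussian moments
`∫₀^c xᵏ e^{-x²/(2σ²)} dx` for `c = b - μ` and `c = μ`, the piece over `[-μ, 0]` picking up the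
sign `(-1)ᵏ` because the kernel is even. The substitution `t = x²/(2σ²)` turns each such moment
into a lower incomplete gamma value.
-/

open MeasureTheory intervalIntegral Real Finset

/-- For `s ≤ -1` both integrals diverge and the identity holds between their junk values `0`. -/
theorem integral_rpow_mul_exp_neg_mul_sq_eq_lowerGamma (s : ℝ) {b c : ℝ} (hb : 0 < b)
    (hc : 0 ≤ c) :
    ∫ x in 0..c, x ^ s * exp (-b * x ^ 2)
      = b ^ (-(s + 1) / 2) / 2 * lowerGamma ((s + 1) / 2) (b * c ^ 2) := by
  have hsubst := integral_comp_mul_deriv_of_deriv_nonneg (a := 0) (b := c)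
    (f := fun x ↦ b * x ^ 2) (f' := fun x ↦ 2 * b * x)
    (g := fun t ↦ t ^ ((s + 1) / 2 - 1) * exp (-t)) (by fun_prop)
    (fun x _ ↦ ((hasDerivAt_pow 2 x).const_mul b).congr_deriv (by ring))
    (fun x hx ↦ by simp only [min_eq_left hc] at hx; have := hx.1; positivity)
  simp only [Function.comp_def, ne_eq, OfNat.ofNat_ne_zero, not_false_eq_true, zero_pow,
    mul_zero] at hsubst
  rw [lowerGamma, ← hsubst, ← intervalIntegral.integral_const_mul]
  refine integral_congr_ae (Filter.Eventually.of_forall fun x hx ↦ ?_)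
  rw [Set.uIoc_of_le hc] at hx
  have hx0 : 0 < x := hx.1
  have hb_pow : b ^ (-(s + 1) / 2) * b ^ ((s + 1) / 2 - 1) * b = 1 := by
    rw [← rpow_add hb, ← rpow_add_one hb.ne']
    ring_nf
    exact rpow_zero b
  have hx_pow : (x ^ 2) ^ ((s + 1) / 2 - 1) * x = x ^ s := by
    rw [← rpow_natCast, ← rpow_mul hx0.le, ← rpow_add_one hx0.ne']
    ring_nf
  rw [mul_rpow hb.le (by positivity), neg_mul]
  linear_combination (-rexp (-(b * x ^ 2))) * hx_pow
    - (x ^ 2) ^ ((s + 1) / 2 - 1) * x * rexp (-(b * x ^ 2)) * hb_pow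

theorem integral_pow_mul_exp_neg_sq_div_eq_lowerGamma (k : ℕ) {σ c : ℝ} (hσ : 0 < σ)
    (hc : 0 ≤ c) :
    ∫ x in 0..c, x ^ k * exp (-x ^ 2 / (2 * σ ^ 2))
      = σ ^ (k + 1) * (2 : ℝ) ^ (((k : ℝ) - 1) / 2)
        * lowerGamma (((k : ℝ) + 1) / 2) (c ^ 2 / (2 * σ ^ 2)) := by
  have hσ_pow : (σ ^ 2) ^ (((k : ℝ) + 1) / 2) = σ ^ (k + 1) := by
    rw [← rpow_natCast σ 2, ← rpow_mul hσ.le, ← rpow_natCast]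
    push_cast
    ring_nf
  have hconst : ((2 * σ ^ 2)⁻¹) ^ (-((k : ℝ) + 1) / 2) / 2
      = σ ^ (k + 1) * 2 ^ (((k : ℝ) - 1) / 2) := by
    rw [inv_rpow (by positivity), neg_div, rpow_neg (by positivity), inv_inv,
      mul_rpow zero_le_two (by positivity), hσ_pow,
      show ((k : ℝ) - 1) / 2 = (k + 1) / 2 - 1 by ring, rpow_sub_one two_ne_zero]
    ring
  have h := integral_rpow_mul_exp_neg_mul_sq_eq_lowerGamma k
    (inv_pos.2 (by positivity : 0 < 2 * σ ^ 2)) hc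
  simp only [rpow_natCast, hconst] at h
  simp only [neg_div, div_eq_inv_mul (_ ^ 2), neg_mul] at h ⊢
  exact h

theorem integral_add_pow_mul (a : ℝ) (n : ℕ) {w : ℝ → ℝ} {p q : ℝ}
    (hw : IntervalIntegrable w volume p q) :
    ∫ x in p..q, (a + x) ^ n * w x
      = ∑ k ∈ range (n + 1), (n.choose k : ℝ) * a ^ (n - k) * ∫ x in p..q, x ^ k * w x := by
  simp_rw [← intervalIntegral.integral_const_mul]
  rw [← integral_finsetSum fun k _ ↦ (hw.continuousOn_mul (by fun_prop)).const_mul _]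
  congr 1
  funext x
  rw [add_comm, add_pow, sum_mul]
  exact sum_congr rfl fun k _ ↦ by ring

theorem integral_neg_pow_mul_of_even (k : ℕ) {w : ℝ → ℝ} (hw : ∀ x, w (-x) = w x) (c : ℝ) :
    ∫ x in -c..0, x ^ k * w x = (-1) ^ k * ∫ x in 0..c, x ^ k * w x := by
  have h := integral_comp_neg (a := 0) (b := c) fun x ↦ x ^ k * w x
  rw [neg_zero] at h
  rw [← h, ← intervalIntegral.integral_const_mul]
  congr 1
  funext x
  rw [hw, neg_pow]
  ring

/-- For `0 < μ < b`, `σ > 0` and `n : ℕ`,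
`∫₀^b uⁿ exp(−(u−μ)²/(2σ²)) du
  = Σ_{k=0}^{n} C(n,k) μ^(n−k) σ^(k+1) 2^((k−1)/2)
    [γ((k+1)/2, (b−μ)²/(2σ²)) + (−1)^k γ((k+1)/2, μ²/(2σ²))]`. -/
theorem gaussian_moment_mu_mid (μ σ b : ℝ) (hμ : 0 < μ) (hb : μ < b)
    (hσ : 0 < σ) (n : ℕ) :
    ∫ u in (0:ℝ)..b, u ^ n * Real.exp (-(u - μ) ^ 2 / (2 * σ ^ 2))
      = ∑ k ∈ Finset.range (n + 1),
          (n.choose k : ℝ) * μ ^ (n - k) * σ ^ (k + 1)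
            * (2 : ℝ) ^ (((k : ℝ) - 1) / 2)
            * (lowerGamma (((k : ℝ) + 1) / 2) ((b - μ) ^ 2 / (2 * σ ^ 2))
               + (-1 : ℝ) ^ k
                 * lowerGamma (((k : ℝ) + 1) / 2) (μ ^ 2 / (2 * σ ^ 2))) := by
  have hkernel : Continuous fun x : ℝ ↦ exp (-x ^ 2 / (2 * σ ^ 2)) := by fun_prop
  have hshift : ∫ u in (0:ℝ)..b, u ^ n * exp (-(u - μ) ^ 2 / (2 * σ ^ 2))
      = ∫ x in -μ..b - μ, (μ + x) ^ n * exp (-x ^ 2 / (2 * σ ^ 2)) := by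
    simpa using (integral_comp_add_left (fun u ↦ u ^ n * exp (-(u - μ) ^ 2 / (2 * σ ^ 2))) μ
      (a := -μ) (b := b - μ)).symm
  rw [hshift, integral_add_pow_mul μ n (hkernel.intervalIntegrable _ _)]
  refine sum_congr rfl fun k _ ↦ ?_
  have hmoment : Continuous fun x : ℝ ↦ x ^ k * exp (-x ^ 2 / (2 * σ ^ 2)) := by fun_prop
  rw [← integral_add_adjacent_intervals (b := 0) (hmoment.intervalIntegrable _ _)
      (hmoment.intervalIntegrable _ _),
    integral_neg_pow_mul_of_even k (fun x ↦ by rw [neg_sq]) μ,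
    integral_pow_mul_exp_neg_sq_div_eq_lowerGamma k hσ hμ.le,
    integral_pow_mul_exp_neg_sq_div_eq_lowerGamma k hσ (sub_nonneg.2 hb.le)]
  ring
end
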